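/- Let A be an m-order n-dimensional real tensor with nonzero diagonal entries and define α_i(A) = β_i(A) if a_{i...i} > 0 and α_i(A) = γ_i(A) if a_{i...i} < 0. Then A is a double B̄-tensor if and only if for all i: (a) |a_{i...i}| > |α_i(A)|, (b) |a_{i...i} − α_i(A)| ≥ Σ_{(i_2,...,i_m)≠(i,...,i)} |α_i(A) − a_{i i_2...i_m}|, and (c) for all i ≠ j: |a_{i...i} − α_i(A)|·|a_{j...j} − α_j(A)| > (Σ_{(i_2,...,i_m)≠(i,...,i)} |α_i(A) − a_{i i_2...i_m}|)·(Σ_{(i_2,...,i_m)≠(j,...,j)} |α_j(A) − a_{j i_2...i_m}|). -/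

import Mathlib

open Finset

section TensorDefs

variable {ι : Type*} [Fintype ι] [DecidableEq ι] {k : ℕ}

/-- diagonal entry `a_{i…i}` of an `(k+1)`-order tensor given by its row slices -/
def diagT (A : ι → (Fin k → ι) → ℝ) (i : ι) : ℝ := A i (fun _ => i)

/-- the off-diagonal multi-indices of row `i` -/
def offT (k : ℕ) (i : ι) : Finset (Fin k → ι) :=
  Finset.univ.filter (fun t => t ≠ (fun _ => i))

/-- the multi-indices different from `(i,…,i)` and `(j,…,j)` -/
def offT2 (k : ℕ) (i j : ι) : Finset (Fin k → ι) :=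
  Finset.univ.filter (fun t => t ≠ (fun _ => i) ∧ t ≠ (fun _ => j))

/-- `r_i(A)` -/
def rT (A : ι → (Fin k → ι) → ℝ) (i : ι) : ℝ := ∑ t ∈ offT k i, |A i t|

/-- `r_j^i(A)` -/
def rT2 (A : ι → (Fin k → ι) → ℝ) (j i : ι) : ℝ := ∑ t ∈ offT2 k i j, |A j t|

/-- `β_i(A) = max{0, off-diagonal entries of row i}` -/
noncomputable def betaT (A : ι → (Fin k → ι) → ℝ) (i : ι) : ℝ :=
  (insert (0:ℝ) ((offT k i).image (A i))).max' (Finset.insert_nonempty _ _)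

/-- `γ_i(A) = min{0, off-diagonal entries of row i}` -/
noncomputable def gammaT (A : ι → (Fin k → ι) → ℝ) (i : ι) : ℝ :=
  (insert (0:ℝ) ((offT k i).image (A i))).min' (Finset.insert_nonempty _ _)

/-- `Δ_i(A)` -/
noncomputable def deltaT (A : ι → (Fin k → ι) → ℝ) (i : ι) : ℝ :=
  ∑ t ∈ offT k i, (betaT A i - A i t)

/-- `Θ_i(A)` -/
noncomputable def thetaT (A : ι → (Fin k → ι) → ℝ) (i : ι) : ℝ :=
  ∑ t ∈ offT k i, (A i t - gammaT A i)

/-- `Δ_j^i(A)` -/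
noncomputable def deltaT2 (A : ι → (Fin k → ι) → ℝ) (j i : ι) : ℝ :=
  ∑ t ∈ offT2 k i j, (betaT A j - A j t)

/-- `Θ_j^i(A)` -/
noncomputable def thetaT2 (A : ι → (Fin k → ι) → ℝ) (j i : ι) : ℝ :=
  ∑ t ∈ offT2 k i j, (A j t - gammaT A j)

/-- `Ā`: the `k`-th row tensor of `A` multiplied by `sign(a_{k…k})` -/
noncomputable def barT (A : ι → (Fin k → ι) → ℝ) : ι → (Fin k → ι) → ℝ :=
  fun i t => Real.sign (diagT A i) * A i t

/-- double `B`-tensor -/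
def DoubleB (A : ι → (Fin k → ι) → ℝ) : Prop :=
  (∀ i, betaT A i < diagT A i) ∧
  (∀ i, deltaT A i ≤ diagT A i - betaT A i) ∧
  (∀ i j, i ≠ j → deltaT A i * deltaT A j <
    (diagT A i - betaT A i) * (diagT A j - betaT A j))

/-- quasi-double `B`-tensor -/
def QuasiDoubleB (A : ι → (Fin k → ι) → ℝ) : Prop :=
  (∀ i, betaT A i < diagT A i) ∧
  ∀ i j, i ≠ j → (betaT A i - A j (fun _ => i)) * deltaT A j <
    (diagT A i - betaT A i) * (diagT A j - betaT A j - deltaT2 A j i)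

/-- symmetric tensor of order `k+1` (row form) -/
def SymT (A : ι → (Fin k → ι) → ℝ) : Prop :=
  ∀ σ : Equiv.Perm (Fin (k+1)), ∀ t : Fin (k+1) → ι,
    A ((t ∘ σ) 0) (Fin.tail (t ∘ σ)) = A (t 0) (Fin.tail t)

end TensorDefs

/-- `α_i(A)`: `β_i(A)` if the diagonal entry is positive, `γ_i(A)` if it is negative. -/
noncomputable def alphaT {ι : Type*} [Fintype ι] [DecidableEq ι] {k : ℕ}
    (A : ι → (Fin k → ι) → ℝ) (i : ι) : ℝ :=
  if 0 < diagT A i then betaT A i else gammaT A i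

/-!
Multiplying row `i` by `sign a_{i…i}` turns the diagonal entry into `|a_{i…i}|`, `β_i` into
`|α_i|` (the maximum of a negated row is minus its minimum) and each `β_i − ā_{i t}` into
`|α_i − a_{i t}|`. Since `α_i` has the sign of `a_{i…i}`, condition (a) gives
`|a_{i…i} − α_i| = |a_{i…i}| − |α_i|`, so the three double-`B` conditions for `Ā` translate
term by term.
-/

section SignedRows

variable {ι : Type*} {k : ℕ} {A : ι → (Fin k → ι) → ℝ} {i : ι}

lemma barT_row_of_pos (h : 0 < diagT A i) : barT A i = A i := by
  funext t
  simp [barT, Real.sign_of_pos h]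

lemma barT_row_of_neg (h : diagT A i < 0) : barT A i = -A i := by
  funext t
  simp [barT, Real.sign_of_neg h]

lemma diagT_barT (hd : diagT A i ≠ 0) : diagT (barT A) i = |diagT A i| := by
  rcases hd.lt_or_gt with h | h
  · rw [abs_of_neg h]
    exact congrFun (barT_row_of_neg h) _
  · rw [abs_of_pos h]
    exact congrFun (barT_row_of_pos h) _

end SignedRows

section Rows

variable {ι : Type*} [Fintype ι] [DecidableEq ι] {k : ℕ} (A : ι → (Fin k → ι) → ℝ) (i : ι)

lemma betaT_le_iff {c : ℝ} : betaT A i ≤ c ↔ 0 ≤ c ∧ ∀ t ∈ offT k i, A i t ≤ c := by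
  simp [betaT, Finset.max'_le_iff]

lemma le_gammaT_iff {c : ℝ} : c ≤ gammaT A i ↔ c ≤ 0 ∧ ∀ t ∈ offT k i, c ≤ A i t := by
  simp [gammaT, Finset.le_min'_iff]

lemma betaT_nonneg : 0 ≤ betaT A i := ((betaT_le_iff A i).1 le_rfl).1

lemma le_betaT {t : Fin k → ι} (ht : t ∈ offT k i) : A i t ≤ betaT A i :=
  ((betaT_le_iff A i).1 le_rfl).2 t ht

lemma gammaT_nonpos : gammaT A i ≤ 0 := ((le_gammaT_iff A i).1 le_rfl).1

lemma gammaT_le {t : Fin k → ι} (ht : t ∈ offT k i) : gammaT A i ≤ A i t :=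
  ((le_gammaT_iff A i).1 le_rfl).2 t ht

variable {A i}

lemma betaT_eq_of_row_eq {B : ι → (Fin k → ι) → ℝ} (h : B i = A i) : betaT B i = betaT A i := by
  simp only [betaT, h]

lemma betaT_eq_neg_gammaT_of_row_eq_neg {B : ι → (Fin k → ι) → ℝ} (h : B i = -A i) :
    betaT B i = -gammaT A i :=
  eq_of_forall_ge_iff fun c => by
    simp only [betaT_le_iff, h, Pi.neg_apply, neg_le, le_gammaT_iff, neg_nonpos]

lemma alphaT_of_pos (h : 0 < diagT A i) : alphaT A i = betaT A i := if_pos h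

lemma alphaT_of_neg (h : diagT A i < 0) : alphaT A i = gammaT A i := if_neg h.not_gt

lemma betaT_barT (hd : diagT A i ≠ 0) : betaT (barT A) i = |alphaT A i| := by
  rcases hd.lt_or_gt with h | h
  · rw [betaT_eq_neg_gammaT_of_row_eq_neg (barT_row_of_neg h), alphaT_of_neg h,
      abs_of_nonpos (gammaT_nonpos A i)]
  · rw [betaT_eq_of_row_eq (barT_row_of_pos h), alphaT_of_pos h, abs_of_nonneg (betaT_nonneg A i)]

lemma deltaT_barT (hd : diagT A i ≠ 0) :
    deltaT (barT A) i = ∑ t ∈ offT k i, |alphaT A i - A i t| := by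
  refine Finset.sum_congr rfl fun t ht => ?_
  rw [betaT_barT hd]
  rcases hd.lt_or_gt with h | h
  · rw [barT_row_of_neg h, alphaT_of_neg h, abs_of_nonpos (gammaT_nonpos A i),
      abs_of_nonpos (sub_nonpos.2 (gammaT_le A i ht)), Pi.neg_apply]
    ring
  · rw [barT_row_of_pos h, alphaT_of_pos h, abs_of_nonneg (betaT_nonneg A i),
      abs_of_nonneg (sub_nonneg.2 (le_betaT A i ht))]

lemma abs_diagT_sub_alphaT (ha : |alphaT A i| < |diagT A i|) :
    |diagT A i - alphaT A i| = |diagT A i| - |alphaT A i| := by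
  rcases lt_trichotomy (diagT A i) 0 with h | h | h
  · rw [alphaT_of_neg h, abs_of_nonpos (gammaT_nonpos A i), abs_of_neg h] at ha ⊢
    rw [abs_of_neg (by linarith)]
    ring
  · rw [h, abs_zero] at ha
    exact absurd ha (abs_nonneg _).not_gt
  · rw [alphaT_of_pos h, abs_of_nonneg (betaT_nonneg A i), abs_of_pos h] at ha ⊢
    exact abs_of_pos (sub_pos.2 ha)

end Rows

/-- Characterization of double `B̄`-tensors. -/
theorem stmt14 {n k : ℕ} (A : Fin n → (Fin k → Fin n) → ℝ)
    (hd : ∀ i, diagT A i ≠ 0) :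
    DoubleB (barT A) ↔
      ((∀ i, |alphaT A i| < |diagT A i|) ∧
       (∀ i, (∑ t ∈ offT k i, |alphaT A i - A i t|) ≤ |diagT A i - alphaT A i|) ∧
       (∀ i j, i ≠ j →
         (∑ t ∈ offT k i, |alphaT A i - A i t|) * (∑ t ∈ offT k j, |alphaT A j - A j t|) <
           |diagT A i - alphaT A i| * |diagT A j - alphaT A j|)) := by
  simp only [DoubleB, fun i => diagT_barT (hd i), fun i => betaT_barT (hd i),
    fun i => deltaT_barT (hd i)]
  exact and_congr_right fun ha => by simp only [fun i => abs_diagT_sub_alphaT (ha i)]
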